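/- Let T : l∞ → l∞ be a continuous positive linear map with adjoint T*, and let F = { p ∈ Δ^σ : there exists λ ∈ ℝ with ⟨T(x), p⟩ = λ·⟨x, p⟩ for all x ∈ l∞ }. (i) If a binary relation ≿ on l∞ satisfies axioms (A1)–(A5), Monotone Continuity (MC), ISU, and ITIS, then there exists a nonempty set D ⊆ F, closed in Δ for the weak* topology, such that I(x) = min_{p∈D} Σ_{n=0}^∞ p_n x_n is the unique constant equivalent representing ≿. (ii) Conversely, if ⟨1, T*(p)⟩ ≤ 1 for every p ∈ F and I(x) = min_{p∈D} ⟨x,p⟩ for some nonempty D ⊆ F closed in Δ, then the relation ≿ represented by I satisfies axioms (A1)–(A5), (MC), ISU, and ITIS. -/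

import Mathlib

open scoped ENNReal BoundedContinuousFunction

noncomputable section

/-- `l∞`: the Banach space of bounded real sequences with the sup norm. -/
abbrev Linf : Type := BoundedContinuousFunction ℕ ℝ

/-- `ba(ℕ)`: the norm dual of `l∞`, endowed with the weak* topology. -/
abbrev Ba : Type := WeakDual ℝ Linf

/-- The constant sequence `(θ, θ, ...)`. -/
def cst (θ : ℝ) : Linf := BoundedContinuousFunction.const ℕ θ

/-- Build an element of `l∞` from a bounded sequence. -/
def ofSeq (f : ℕ → ℝ) (C : ℝ) (h : ∀ n, |f n| ≤ C) : Linf :=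
  BoundedContinuousFunction.ofNormedAddCommGroupDiscrete f C
    (by simpa [Real.norm_eq_abs] using h)

/-- The delayed sequence `(0, d₀, d₁, d₂, ...)`. -/
def delaySeq (d : Linf) : Linf :=
  ofSeq (fun n => if n = 0 then 0 else d (n - 1)) ‖d‖ (by
    intro n
    by_cases h : n = 0
    · simp [h]
    · simpa [h, Real.norm_eq_abs] using d.norm_coe_le_norm (n - 1))

/-- The shifted sequence `(x₁, x₂, x₃, ...)`. -/
def shiftSeq (x : Linf) : Linf :=
  x.compContinuous ⟨fun n => n + 1, continuous_of_discreteTopology⟩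

/-- The permuted sequence `x_σ = (x_{σ 0}, x_{σ 1}, ...)`. -/
def permSeq (σ : Equiv.Perm ℕ) (x : Linf) : Linf :=
  x.compContinuous ⟨fun n => σ n, continuous_of_discreteTopology⟩

/-- The indicator sequence of a set `A ⊆ ℕ`. -/
def indic (A : Set ℕ) : Linf :=
  ofSeq (A.indicator fun _ => (1 : ℝ)) 1 (by
    intro n
    by_cases h : n ∈ A
    · simp [Set.indicator_of_mem h]
    · simp [Set.indicator_of_notMem h])

/-- `kEx`: the sequence equal to `k` on `E` and to `x` off `E`. -/
def patch (k : ℝ) (E : Set ℕ) (x : Linf) : Linf :=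
  ofSeq (fun n => E.indicator (fun _ => k) n + Eᶜ.indicator (fun m => x m) n)
    (|k| + ‖x‖) (by
    intro n
    by_cases h : n ∈ E
    · simp only [Set.indicator_of_mem h, Set.indicator_of_notMem (by simpa using h :
        n ∉ Eᶜ), add_zero]
      exact le_add_of_le_of_nonneg le_rfl (norm_nonneg x)
    · simp only [Set.indicator_of_notMem h, Set.indicator_of_mem (by simpa using h :
        n ∈ Eᶜ), zero_add]
      calc |x n| ≤ ‖x‖ := by simpa [Real.norm_eq_abs] using x.norm_coe_le_norm n
      _ ≤ |k| + ‖x‖ := le_add_of_nonneg_left (abs_nonneg k))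

/-- The exponential discounted sum `(1-δ) ∑ δ^t x_t` (convention `0^0 = 1`). -/
def discSum (δ : ℝ) (x : Linf) : ℝ := (1 - δ) * ∑' t, δ ^ t * x t

/-! ### Axioms -/

/-- The strict (asymmetric) part of a relation. -/
def SPref (R : Linf → Linf → Prop) (x y : Linf) : Prop := R x y ∧ ¬ R y x

/-- (A1) Weak order: complete and transitive. -/
def A1 (R : Linf → Linf → Prop) : Prop :=
  (∀ x y, R x y ∨ R y x) ∧ ∀ x y z, R x y → R y z → R x z

/-- (A2) Monotonicity. -/
def A2 (R : Linf → Linf → Prop) : Prop :=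
  (∀ x y : Linf, (∀ n, y n ≤ x n) → R x y) ∧ SPref R (cst 1) (cst 0)

/-- (A3) Continuity. -/
def A3 (R : Linf → Linf → Prop) : Prop := ∀ x y z : Linf,
  IsClosed {α : ℝ | α ∈ Set.Icc (0 : ℝ) 1 ∧ R (α • x + (1 - α) • z) y} ∧
  IsClosed {α : ℝ | α ∈ Set.Icc (0 : ℝ) 1 ∧ R y (α • x + (1 - α) • z)}

/-- (A4) Invariance with respect to a common reference point. -/
def A4 (R : Linf → Linf → Prop) : Prop :=
  ∀ x y : Linf, ∀ θ : ℝ, R x y → R (x + cst θ) (y + cst θ)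

/-- (A5) Convexity. -/
def A5 (R : Linf → Linf → Prop) : Prop :=
  ∀ x y : Linf, ∀ θ lam : ℝ, lam ∈ Set.Icc (0 : ℝ) 1 →
    R x (cst θ) → R y (cst θ) → R (lam • x + (1 - lam) • y) (cst θ)

/-- Axioms (A1)-(A5) together. -/
def A15 (R : Linf → Linf → Prop) : Prop := A1 R ∧ A2 R ∧ A3 R ∧ A4 R ∧ A5 R

/-- (MC) Monotone continuity. -/
def MC (R : Linf → Linf → Prop) : Prop :=
  ∀ (x : Linf) (θ : ℝ), SPref R x (cst θ) →
    ∀ E : ℕ → Set ℕ, (∀ n, E (n + 1) ⊆ E n) → (⋂ n, E n) = ∅ →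
      ∀ k : ℝ, ∃ n₀ : ℕ, SPref R (patch k (E n₀) x) (cst θ)

/-- (IDIS) Invariance with respect to delaying improving sequences. -/
def IDIS (R : Linf → Linf → Prop) : Prop :=
  ∀ x d : Linf, R (x + d) x → R (x + delaySeq d) x

/-- (ISU) Invariance with respect to the scale of utils. -/
def ISU (R : Linf → Linf → Prop) : Prop :=
  ∀ x y : Linf, ∀ α : ℝ, 0 ≤ α → R x y → R (α • x) (α • y)

/-- (IOU) Invariance with respect to individual origins of utilities. -/
def IOU (R : Linf → Linf → Prop) : Prop :=
  ∀ x y z : Linf, (R x y ∧ R y x) → (R (x + z) (y + z) ∧ R (y + z) (x + z))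

/-- Strong monotonicity. -/
def StrongMono (R : Linf → Linf → Prop) : Prop :=
  (∀ x y : Linf, (∀ n, y n ≤ x n) → R x y) ∧
  ∀ x y : Linf, (∀ n, y n ≤ x n) → x ≠ y → SPref R x y

/-- (ITIS) Invariance with respect to applying `T` to improving sequences. -/
def ITIS (T : Linf → Linf) (R : Linf → Linf → Prop) : Prop :=
  ∀ x d : Linf, R (x + d) x → R (x + T d) x

/-- Time invariance: `x ∼ (x₁, x₂, x₃, ...)`. -/
def TimeInv (R : Linf → Linf → Prop) : Prop :=
  ∀ x : Linf, R x (shiftSeq x) ∧ R (shiftSeq x) x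

/-- `I` is a constant equivalent for `≿`: `x ∼ I(x)` for every `x`. -/
def ConstEquiv (R : Linf → Linf → Prop) (I : Linf → ℝ) : Prop :=
  ∀ x, R x (cst (I x)) ∧ R (cst (I x)) x

/-- `I` represents `≿`: `x ≿ y ↔ I(x) ≥ I(y)`. -/
def Represents (R : Linf → Linf → Prop) (I : Linf → ℝ) : Prop :=
  ∀ x y, R x y ↔ I y ≤ I x

/-! ### Discount structures -/

/-- A functional `p ∈ ba(ℕ)` is positive. -/
def IsPos (p : Ba) : Prop := ∀ x : Linf, (∀ n, 0 ≤ x n) → 0 ≤ p x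

/-- `Δ`: the set of discount structures. -/
def Delta : Set Ba := {p | IsPos p ∧ p (cst 1) = 1}

/-- `Δ^σ`: countably additive discount structures. -/
def DeltaSigma : Set Ba :=
  {p ∈ Delta | ∃ f : ℕ → ℝ, (∀ n, 0 ≤ f n) ∧ Summable f ∧ (∑' n, f n) = 1 ∧
    ∀ x : Linf, p x = ∑' n, f n * x n}

/-- `ℬ`: the set of Banach–Mazur limits. -/
def BM : Set Ba := {p ∈ Delta | ∀ x : Linf, p (shiftSeq x) = p x}

/-- The exponential discounting functionals with parameter `δ ∈ [0,1)`. -/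
def Geom : Set Ba := {p | ∃ δ ∈ Set.Ico (0 : ℝ) 1, ∀ x : Linf, p x = discSum δ x}

/-- `Δ(T*)`: discount structures that are eigenvectors of the adjoint of `T`,
expressed via the duality `⟨T x, p⟩ = λ ⟨x, p⟩`. -/
def DeltaT (T : Linf → Linf) : Set Ba :=
  {p ∈ Delta | ∃ lam : ℝ, ∀ x : Linf, p (T x) = lam * p x}

/-- A map `T : l∞ → l∞` is positive. -/
def PosMap (T : Linf → Linf) : Prop :=
  ∀ x : Linf, (∀ n, 0 ≤ x n) → ∀ n, 0 ≤ T x n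

/-- `ca(ℕ)`: countably additive elements of `ba(ℕ)`. -/
def caSet : Set Ba :=
  {μ | ∀ A : ℕ → Set ℕ, (∀ n, A (n + 1) ⊆ A n) → (⋂ n, A n) = ∅ →
    Filter.Tendsto (fun n => μ (indic (A n))) Filter.atTop (nhds 0)}

/-- `pa(ℕ)`: purely finitely additive elements of `ba(ℕ)`. -/
def paSet : Set Ba := {μ | ∀ n : ℕ, μ (indic {n}) = 0}

/-- `c` is grounded on `D`. -/
def Grounded (D : Set Ba) (c : Ba → ℝ≥0∞) : Prop := (⨅ p ∈ D, c p) = 0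

/-- `c` is grounded on `[0,1]`. -/
def Grounded01 (c : ℝ → ℝ≥0∞) : Prop := (⨅ δ ∈ Set.Icc (0 : ℝ) 1, c δ) = 0

/-- Maxmin form: `I(x) = min_{p ∈ D} ⟨x,p⟩`, the minimum being attained. -/
def MinForm (D : Set Ba) (I : Linf → ℝ) : Prop :=
  ∀ x, (∃ p ∈ D, I x = p x) ∧ ∀ p ∈ D, I x ≤ p x

/-- Variational form: `I(x) = min_{p ∈ D} {⟨x,p⟩ + c(p)}`, the minimum being attained. -/
def VarMinForm (D : Set Ba) (c : Ba → ℝ≥0∞) (I : Linf → ℝ) : Prop :=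
  ∀ x, (∃ p ∈ D, (I x : EReal) = (p x : EReal) + (c p : EReal)) ∧
    ∀ p ∈ D, (I x : EReal) ≤ (p x : EReal) + (c p : EReal)

/-- Maxmin discounting form over a set of discount factors `E ⊆ [0,1)`. -/
def MinDelta (E : Set ℝ) (I : Linf → ℝ) : Prop :=
  ∀ x, (∃ δ ∈ E, I x = discSum δ x) ∧ ∀ δ ∈ E, I x ≤ discSum δ x

/-- Variational discounting form over discount factors. -/
def VarMinDelta (E : Set ℝ) (c : ℝ → ℝ≥0∞) (I : Linf → ℝ) : Prop :=
  ∀ x, (∃ δ ∈ E, (I x : EReal) = (discSum δ x : EReal) + (c δ : EReal)) ∧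
    ∀ δ ∈ E, (I x : EReal) ≤ (discSum δ x : EReal) + (c δ : EReal)

/-- Convexity for `ℝ≥0∞`-valued functions on a subset of `ba(ℕ)`. -/
def ConvexENN (D : Set Ba) (g : Ba → ℝ≥0∞) : Prop :=
  ∀ p ∈ D, ∀ q ∈ D, ∀ a b : ℝ, 0 ≤ a → 0 ≤ b → a + b = 1 →
    g (a • p + b • q) ≤ ENNReal.ofReal a * g p + ENNReal.ofReal b * g q

/-!
(ii) A minimum of discount structures is a normalized, monotone, superlinear and hence
1-Lipschitz functional, which gives (A1)–(A5) and ISU. MC holds because the tails of a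
weak*-compact family of countably additive measures vanish uniformly, and ITIS because every
`p ∈ D` satisfies `⟨T d, p⟩ = λ ⟨d, p⟩` with `0 ≤ λ ≤ 1`.

(i) Conversely, the axioms yield a constant equivalent `I` that is normalized, monotone and
superlinear, so by Hahn–Banach `I` is the lower envelope of its core `C = {p | I ≤ p}`. MC forces
the tails of every `p ∈ C` to vanish, so `C ⊆ Δ^σ`. By ITIS, for `p ∈ C` with `λ = ⟨T 1, p⟩ > 0`
the functional `λ⁻¹ (p ∘ T)` lies in `C` again and touches `I` wherever `p` does; hence every
exposed point of `C` is an eigenvector of `T*`. Maximizing the strictly convex weak*-continuous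
function `p ↦ ∑ 2⁻ⁿ pₙ² - t ⟨x, p⟩` over `C` produces exposed points whose value at `x` is within
`2 / t` of `I x`, so `I` is the minimum over `C ∩ {eigenvectors of T*}`.
-/

open Set Filter Topology

section Sequences

lemma cst_apply (θ : ℝ) (n : ℕ) : cst θ n = θ := rfl

lemma indic_apply (A : Set ℕ) (n : ℕ) : indic A n = A.indicator (fun _ => 1) n := rfl

lemma indic_apply_mem {A : Set ℕ} {n : ℕ} (h : n ∈ A) : indic A n = 1 := by
  simp [indic_apply, h]

lemma indic_apply_notMem {A : Set ℕ} {n : ℕ} (h : n ∉ A) : indic A n = 0 := by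
  simp [indic_apply, h]

lemma indic_nonneg (A : Set ℕ) (n : ℕ) : 0 ≤ indic A n := by
  rw [indic_apply]; exact Set.indicator_nonneg (fun _ _ => zero_le_one) n

lemma indic_le_one (A : Set ℕ) (n : ℕ) : indic A n ≤ 1 := by
  rw [indic_apply]; exact Set.indicator_le_self' (fun _ _ => zero_le_one) n

lemma indic_le_indic {A B : Set ℕ} (h : A ⊆ B) (n : ℕ) : indic A n ≤ indic B n :=
  Set.indicator_le_indicator_of_subset h (fun _ => zero_le_one) n

lemma norm_indic_le (A : Set ℕ) : ‖indic A‖ ≤ 1 :=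
  (BoundedContinuousFunction.norm_le zero_le_one).2 fun n => by
    rw [Real.norm_eq_abs, abs_of_nonneg (indic_nonneg A n)]; exact indic_le_one A n

lemma patch_apply (k : ℝ) (E : Set ℕ) (x : Linf) (n : ℕ) [Decidable (n ∈ E)] :
    patch k E x n = if n ∈ E then k else x n := by
  by_cases h : n ∈ E <;> simp [patch, ofSeq, h]

lemma abs_apply_le_norm (x : Linf) (n : ℕ) : |x n| ≤ ‖x‖ := by
  simpa [Real.norm_eq_abs] using x.norm_coe_le_norm n

lemma smul_cst (α a : ℝ) : α • cst a = cst (α * a) := by ext; simp [cst]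

lemma cst_add (a b : ℝ) : cst a + cst b = cst (a + b) := by ext; simp [cst]

lemma neg_cst (a : ℝ) : -cst a = cst (-a) := by ext; simp [cst]

lemma zero_eq_cst : (0 : Linf) = cst 0 := by ext; simp [cst]

end Sequences

section Positive

variable {F : Type*} [FunLike F Linf ℝ] [LinearMapClass F ℝ Linf ℝ] {f : F}

lemma apply_le_apply_of_nonneg (hf : ∀ x : Linf, (∀ n, 0 ≤ x n) → 0 ≤ f x) {x y : Linf}
    (h : ∀ n, x n ≤ y n) : f x ≤ f y := by
  have := hf (y - x) fun n => sub_nonneg.2 (h n)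
  rwa [map_sub, sub_nonneg] at this

lemma abs_apply_le_apply_of_nonneg (hf : ∀ x : Linf, (∀ n, 0 ≤ x n) → 0 ≤ f x) {x y : Linf}
    (h : ∀ n, |x n| ≤ y n) : |f x| ≤ f y := by
  have hneg := apply_le_apply_of_nonneg hf (x := -y) (y := x) fun n => by
    simpa using neg_le_of_abs_le (h n)
  rw [map_neg] at hneg
  exact abs_le.2 ⟨hneg, apply_le_apply_of_nonneg hf fun n => le_of_abs_le (h n)⟩

lemma abs_apply_le_mul_norm_of_nonneg (hf : ∀ x : Linf, (∀ n, 0 ≤ x n) → 0 ≤ f x) (x : Linf) :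
    |f x| ≤ f (cst 1) * ‖x‖ := by
  have := abs_apply_le_apply_of_nonneg hf (x := x) (y := ‖x‖ • cst 1) fun n => by
    simpa [smul_cst, cst_apply] using abs_apply_le_norm x n
  rwa [map_smul, smul_eq_mul, mul_comm] at this

/-- Positive linear functionals on `l∞` are automatically continuous. -/
def ofPositive (f : Linf →ₗ[ℝ] ℝ) (hf : ∀ x : Linf, (∀ n, 0 ≤ x n) → 0 ≤ f x)
    (h1 : f (cst 1) = 1) : Ba :=
  f.mkContinuous 1 fun x => by
    simpa [Real.norm_eq_abs, h1] using abs_apply_le_mul_norm_of_nonneg hf x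

lemma ofPositive_apply (f : Linf →ₗ[ℝ] ℝ) (hf : ∀ x : Linf, (∀ n, 0 ≤ x n) → 0 ≤ f x)
    (h1 : f (cst 1) = 1) (x : Linf) : ofPositive f hf h1 x = f x := rfl

lemma Delta.apply_cst {p : Ba} (hp : p ∈ Delta) (θ : ℝ) : p (cst θ) = θ := by
  rw [← mul_one θ, ← smul_cst, map_smul, hp.2, smul_eq_mul]

lemma isCompact_of_subset_Delta {K : Set Ba} (hK : IsClosed K) (hKΔ : K ⊆ Delta) :
    IsCompact K := by
  refine (WeakDual.isCompact_closedBall (𝕜 := ℝ) (E := Linf) 0 1).of_isClosed_subset hK ?_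
  intro p hp
  simp only [Set.mem_preimage, Metric.mem_closedBall, dist_zero_right]
  refine ContinuousLinearMap.opNorm_le_bound _ zero_le_one fun y => ?_
  simpa [Real.norm_eq_abs, (hKΔ hp).2] using abs_apply_le_mul_norm_of_nonneg (hKΔ hp).1 y

end Positive

section CountablyAdditive

def coef (p : Ba) (n : ℕ) : ℝ := p (indic {n})

lemma coef_nonneg {p : Ba} (hp : p ∈ Delta) (n : ℕ) : 0 ≤ coef p n :=
  hp.1 _ (indic_nonneg _)

lemma coef_le_one {p : Ba} (hp : p ∈ Delta) (n : ℕ) : coef p n ≤ 1 := by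
  simpa [coef, hp.2] using
    apply_le_apply_of_nonneg hp.1 (x := indic {n}) (y := cst 1) (indic_le_one _)

lemma hasSum_coef_mul {p : Ba} (hp : p ∈ DeltaSigma) (y : Linf) :
    HasSum (fun n => coef p n * y n) (p y) := by
  obtain ⟨-, f, hf0, hf, -, hrep⟩ := hp
  have hcoef : coef p = f := funext fun n => by
    rw [coef, hrep, tsum_eq_single n fun m hm => by
      rw [indic_apply_notMem (by simpa using hm), mul_zero]]
    rw [indic_apply_mem (Set.mem_singleton n), mul_one]
  have hsum : Summable fun n => f n * y n :=
    (hf.mul_right ‖y‖).of_norm_bounded fun n => by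
      rw [Real.norm_eq_abs, abs_mul, abs_of_nonneg (hf0 n)]
      exact mul_le_mul_of_nonneg_left (abs_apply_le_norm y n) (hf0 n)
  rw [hcoef, hrep]
  exact hsum.hasSum

lemma eq_of_coef_eq {p q : Ba} (hp : p ∈ DeltaSigma) (hq : q ∈ DeltaSigma)
    (h : coef p = coef q) : p = q :=
  DFunLike.ext p q fun y => (hasSum_coef_mul hp y).unique (h ▸ hasSum_coef_mul hq y)

lemma abs_sub_sum_coef_mul_le {p : Ba} (hp : IsPos p) (x : Linf) (N : ℕ) :
    |p x - ∑ n ∈ Finset.range N, coef p n * x n| ≤ ‖x‖ * p (indic (Ici N)) := by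
  classical
  have hrest : ∀ m, (x - ∑ n ∈ Finset.range N, x n • indic {n}) m = (Ici N).indicator x m := by
    intro m
    simp only [BoundedContinuousFunction.coe_sub, BoundedContinuousFunction.coe_sum,
      BoundedContinuousFunction.coe_smul, Pi.sub_apply, Finset.sum_apply,
      indic_apply, smul_eq_mul, Set.indicator_apply, Set.mem_singleton_iff, mul_ite, mul_one,
      mul_zero, Finset.sum_ite_eq, Finset.mem_range, Set.mem_Ici]
    split_ifs <;> first | (exfalso; omega) | ring
  have hle := abs_apply_le_apply_of_nonneg hp
    (x := x - ∑ n ∈ Finset.range N, x n • indic {n}) (y := ‖x‖ • indic (Ici N)) fun m => by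
      show |_| ≤ ‖x‖ * indic (Ici N) m
      rw [hrest, indic_apply, Set.indicator_apply, Set.indicator_apply]
      split_ifs
      · simpa using abs_apply_le_norm x m
      · simp
  simpa [map_sub, map_sum, map_smul, coef, mul_comm] using hle

lemma mem_DeltaSigma_of_tendsto {p : Ba} (hp : p ∈ Delta)
    (htail : Tendsto (fun N => p (indic (Ici N))) atTop (𝓝 0)) : p ∈ DeltaSigma := by
  have hpartial : ∀ x : Linf,
      Tendsto (fun N => ∑ n ∈ Finset.range N, coef p n * x n) atTop (𝓝 (p x)) := by
    intro x
    rw [tendsto_iff_norm_sub_tendsto_zero]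
    refine squeeze_zero (fun _ => norm_nonneg _) (fun N => ?_) (by simpa using htail.const_mul ‖x‖)
    rw [Real.norm_eq_abs, abs_sub_comm]
    exact abs_sub_sum_coef_mul_le hp.1 x N
  have hcoef : HasSum (coef p) 1 := by
    rw [hasSum_iff_tendsto_nat_of_nonneg (coef_nonneg hp)]
    simpa [cst_apply, hp.2] using hpartial (cst 1)
  refine ⟨hp, coef p, coef_nonneg hp, hcoef.summable, hcoef.tsum_eq, fun x => ?_⟩
  have hsum : Summable fun n => coef p n * x n :=
    (hcoef.summable.mul_right ‖x‖).of_norm_bounded fun n => by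
      rw [Real.norm_eq_abs, abs_mul, abs_of_nonneg (coef_nonneg hp n)]
      exact mul_le_mul_of_nonneg_left (abs_apply_le_norm x n) (coef_nonneg hp n)
  exact tendsto_nhds_unique (hpartial x) hsum.hasSum.tendsto_sum_nat

lemma tendsto_apply_indic {p : Ba} (hp : p ∈ DeltaSigma) {E : ℕ → Set ℕ} (hE : Antitone E)
    (hempty : ⋂ n, E n = ∅) : Tendsto (fun n => p (indic (E n))) atTop (𝓝 0) := by
  have hsum : Summable (coef p) := by
    simpa [cst_apply] using (hasSum_coef_mul hp (cst 1)).summable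
  have hevent : ∀ m, ∀ᶠ n in atTop, m ∉ E n := fun m => by
    obtain ⟨n₀, hn₀⟩ : ∃ n₀, m ∉ E n₀ := by
      simpa using Set.eq_empty_iff_forall_notMem.1 hempty m
    exact eventually_atTop.2 ⟨n₀, fun n hn hm => hn₀ (hE hn hm)⟩
  have := tendsto_tsum_of_dominated_convergence (𝓕 := atTop) hsum
    (f := fun n m => coef p m * indic (E n) m) (g := fun _ => 0)
    (fun m => tendsto_const_nhds.congr' <| (hevent m).mono fun n hn => by
      simp [indic_apply_notMem hn])
    (Eventually.of_forall fun n m => by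
      rw [Real.norm_eq_abs, abs_mul, abs_of_nonneg (coef_nonneg hp.1 m),
        abs_of_nonneg (indic_nonneg _ m)]
      exact mul_le_of_le_one_right (coef_nonneg hp.1 m) (indic_le_one _ m))
  simpa [(hasSum_coef_mul hp _).tsum_eq] using this

lemma IsCompact.exists_forall_apply_indic_lt {K : Set Ba} (hK : IsCompact K)
    (hKσ : K ⊆ DeltaSigma) {E : ℕ → Set ℕ} (hE : Antitone E) (hempty : ⋂ n, E n = ∅)
    {ε : ℝ} (hε : 0 < ε) : ∃ n₀, ∀ p ∈ K, p (indic (E n₀)) < ε := by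
  obtain ⟨s, hs⟩ := hK.elim_finite_subcover (fun n => {p : Ba | p (indic (E n)) < ε})
    (fun n => isOpen_lt (WeakDual.eval_continuous _) continuous_const) fun p hp =>
      Set.mem_iUnion.2 ((tendsto_apply_indic (hKσ hp) hE hempty).eventually (gt_mem_nhds hε)).exists
  refine ⟨s.sup id, fun p hp => ?_⟩
  obtain ⟨n, hn, hpn⟩ := Set.mem_iUnion₂.1 (hs hp)
  exact (apply_le_apply_of_nonneg (hKσ hp).1.1
    (indic_le_indic (hE (Finset.le_sup (f := id) hn)))).trans_lt hpn

end CountablyAdditive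

section Exposed

def weightedCoefs (p : Ba) : Linf :=
  ofSeq (fun n => (1 / 2) ^ n * coef p n) ‖WeakDual.toStrongDual p‖ fun n =>
    calc |(1 / 2) ^ n * coef p n| ≤ |coef p n| := by
          rw [abs_mul, abs_of_pos (by positivity)]
          exact mul_le_of_le_one_left (abs_nonneg _) (pow_le_one₀ (by norm_num) (by norm_num))
      _ ≤ ‖WeakDual.toStrongDual p‖ * ‖indic {n}‖ := (WeakDual.toStrongDual p).le_opNorm _
      _ ≤ ‖WeakDual.toStrongDual p‖ :=
          mul_le_of_le_one_right (WeakDual.toStrongDual p).opNorm_nonneg (norm_indic_le _)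

/-- The weights make this weak* continuous on `Δ`; on `Δ^σ` it is strictly convex. -/
def weightedSqNorm (p : Ba) : ℝ := ∑' n, (1 / 2) ^ n * coef p n ^ 2

lemma weightedSqNorm_term_le {p : Ba} (hp : p ∈ Delta) (n : ℕ) :
    |(1 / 2 : ℝ) ^ n * coef p n ^ 2| ≤ (1 / 2) ^ n := by
  rw [abs_of_nonneg (by positivity)]
  exact mul_le_of_le_one_right (by positivity)
    (pow_le_one₀ (coef_nonneg hp n) (coef_le_one hp n))

lemma hasSum_weightedSqNorm {p : Ba} (hp : p ∈ Delta) :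
    HasSum (fun n => (1 / 2) ^ n * coef p n ^ 2) (weightedSqNorm p) :=
  (summable_geometric_two.of_norm_bounded (weightedSqNorm_term_le hp)).hasSum

lemma weightedSqNorm_nonneg (p : Ba) : 0 ≤ weightedSqNorm p := tsum_nonneg fun n => by positivity

lemma weightedSqNorm_le_two {p : Ba} (hp : p ∈ Delta) : weightedSqNorm p ≤ 2 :=
  hasSum_le (fun n => le_of_abs_le (weightedSqNorm_term_le hp n)) (hasSum_weightedSqNorm hp)
    hasSum_geometric_two

lemma continuousOn_weightedSqNorm : ContinuousOn weightedSqNorm Delta :=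
  continuousOn_tsum
    (fun _ => (continuous_const.mul ((WeakDual.eval_continuous _).pow 2)).continuousOn)
    summable_geometric_two fun n _ hp => weightedSqNorm_term_le hp n

lemma hasSum_apply_weightedCoefs {q : Ba} (hq : q ∈ DeltaSigma) (p : Ba) :
    HasSum (fun n => (1 / 2) ^ n * coef q n * coef p n) (q (weightedCoefs p)) :=
  (hasSum_coef_mul hq (weightedCoefs p)).congr_fun fun n => by
    show _ = coef q n * ((1 / 2) ^ n * coef p n)
    ring

def IsExposedBy (K : Set Ba) (w : Linf) (p : Ba) : Prop :=
  ∀ q ∈ K, p w ≤ q w ∧ (q w = p w → q = p)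

lemma isExposedBy_of_isMaxOn {K : Set Ba} (hK : K ⊆ DeltaSigma) {p : Ba} (hp : p ∈ K)
    {t : ℝ} {x : Linf} (hmax : IsMaxOn (fun q => weightedSqNorm q - t * q x) K p) :
    IsExposedBy K (t • x - (2 : ℝ) • weightedCoefs p) p := by
  intro q hq
  set S := weightedSqNorm
  have hpp : p (weightedCoefs p) = S p :=
    (hasSum_apply_weightedCoefs (hK hp) p).unique <|
      (hasSum_weightedSqNorm (hK hp).1).congr_fun fun n => by ring
  have hdist : HasSum (fun n => (1 / 2) ^ n * (coef q n - coef p n) ^ 2)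
      (S q - 2 * q (weightedCoefs p) + S p) :=
    (((hasSum_weightedSqNorm (hK hq).1).sub
      ((hasSum_apply_weightedCoefs (hK hq) p).mul_left 2)).add
        (hasSum_weightedSqNorm (hK hp).1)).congr_fun fun n => by ring
  have hnonneg : ∀ n, 0 ≤ (1 / 2 : ℝ) ^ n * (coef q n - coef p n) ^ 2 := fun n => by positivity
  have hφ : S q - t * q x ≤ S p - t * p x := hmax hq
  have hgap : q (t • x - (2 : ℝ) • weightedCoefs p) - p (t • x - (2 : ℝ) • weightedCoefs p)
      = (S p - t * p x) - (S q - t * q x) + (S q - 2 * q (weightedCoefs p) + S p) := by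
    simp only [map_sub, map_smul, smul_eq_mul, hpp]
    ring
  have hdist_nonneg := hdist.nonneg hnonneg
  refine ⟨by linarith, fun heq => eq_of_coef_eq (hK hq) (hK hp) (funext fun n => ?_)⟩
  have hzero := (hasSum_zero_iff_of_nonneg hnonneg).1 (by convert hdist using 1; linarith)
  simpa [sub_eq_zero] using congr_fun hzero n

lemma exists_isExposedBy_le_add {K : Set Ba} (hKc : IsCompact K) (hK : K ⊆ DeltaSigma)
    {p₀ : Ba} (hp₀ : p₀ ∈ K) (x : Linf) {ε : ℝ} (hε : 0 < ε) :
    ∃ p ∈ K, (∃ w, IsExposedBy K w p) ∧ p x ≤ p₀ x + ε := by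
  have hKΔ : K ⊆ Delta := fun p hp => (hK hp).1
  obtain ⟨p, hp, hmax⟩ := hKc.exists_isMaxOn ⟨p₀, hp₀⟩
    ((continuousOn_weightedSqNorm.mono hKΔ).sub
      (continuous_const.mul (WeakDual.eval_continuous x)).continuousOn :
      ContinuousOn (fun q => weightedSqNorm q - 2 / ε * q x) K)
  refine ⟨p, hp, ⟨_, isExposedBy_of_isMaxOn hK hp hmax⟩, ?_⟩
  have h₀ : weightedSqNorm p₀ - 2 / ε * p₀ x ≤ weightedSqNorm p - 2 / ε * p x := hmax hp₀
  have hgap : 2 / ε * (p x - p₀ x) ≤ 2 := by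
    linarith [weightedSqNorm_nonneg p₀, weightedSqNorm_le_two (hKΔ hp)]
  rw [div_mul_eq_mul_div, div_le_iff₀ hε] at hgap
  linarith

end Exposed

section NormalizedSuperlinear

structure IsNormalizedSuperlinear (I : Linf → ℝ) : Prop where
  superadd : ∀ x y, I x + I y ≤ I (x + y)
  smul : ∀ α : ℝ, 0 ≤ α → ∀ x, I (α • x) = α * I x
  mono : ∀ x y : Linf, (∀ n, x n ≤ y n) → I x ≤ I y
  map_cst : ∀ θ, I (cst θ) = θ

def core (I : Linf → ℝ) : Set Ba := {p | ∀ y, I y ≤ p y}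

lemma isClosed_core (I : Linf → ℝ) : IsClosed (core I) := by
  simp only [core, Set.ofPred_forall]
  exact isClosed_iInter fun y => isClosed_le continuous_const (WeakDual.eval_continuous y)

namespace IsNormalizedSuperlinear

variable {I : Linf → ℝ}

lemma map_zero (hI : IsNormalizedSuperlinear I) : I 0 = 0 := by
  rw [zero_eq_cst, hI.map_cst]

lemma add_neg_le (hI : IsNormalizedSuperlinear I) (x : Linf) : I x + I (-x) ≤ 0 := by
  simpa [hI.map_zero] using hI.superadd x (-x)

lemma add_cst (hI : IsNormalizedSuperlinear I) (x : Linf) (θ : ℝ) :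
    I (x + cst θ) = I x + θ := by
  have h₁ := hI.superadd x (cst θ)
  have h₂ := hI.superadd (x + cst θ) (cst (-θ))
  rw [add_assoc, cst_add, add_neg_cancel, ← zero_eq_cst, add_zero] at h₂
  rw [hI.map_cst] at h₁ h₂
  linarith

lemma abs_sub_le (hI : IsNormalizedSuperlinear I) (x y : Linf) : |I x - I y| ≤ ‖x - y‖ := by
  have key : ∀ u v : Linf, I u - I v ≤ ‖u - v‖ := fun u v => by
    have := hI.mono u (v + cst ‖u - v‖) fun n => by
      have := le_of_abs_le (abs_apply_le_norm (u - v) n)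
      simp only [BoundedContinuousFunction.coe_sub, Pi.sub_apply] at this
      simp only [BoundedContinuousFunction.coe_add, Pi.add_apply, cst_apply]
      linarith
    rw [hI.add_cst] at this
    linarith
  exact abs_sub_le_iff.2 ⟨key x y, norm_sub_rev x y ▸ key y x⟩

lemma continuous (hI : IsNormalizedSuperlinear I) : Continuous I :=
  (LipschitzWith.of_dist_le_mul (K := 1) fun x y => by
    simpa [Real.dist_eq, dist_eq_norm] using hI.abs_sub_le x y).continuous

lemma concave (hI : IsNormalizedSuperlinear I) (x y : Linf) {a : ℝ} (ha : a ∈ Icc (0 : ℝ) 1) :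
    a * I x + (1 - a) * I y ≤ I (a • x + (1 - a) • y) := by
  rw [← hI.smul a ha.1, ← hI.smul (1 - a) (sub_nonneg.2 ha.2)]
  exact hI.superadd _ _

lemma core_subset_Delta (hI : IsNormalizedSuperlinear I) : core I ⊆ Delta := by
  intro p hp
  refine ⟨fun y hy => ?_, le_antisymm ?_ ?_⟩
  · exact (hI.map_cst 0 ▸ hI.mono (cst 0) y hy).trans (hp y)
  · have := hp (cst (-1))
    rw [hI.map_cst, ← neg_cst, map_neg] at this
    linarith
  · exact (hI.map_cst 1).symm.le.trans (hp _)

lemma isCompact_core (hI : IsNormalizedSuperlinear I) : IsCompact (core I) :=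
  isCompact_of_subset_Delta (isClosed_core I) hI.core_subset_Delta

lemma core_subset_DeltaSigma (hI : IsNormalizedSuperlinear I)
    (hMC : MC fun x y => I y ≤ I x) : core I ⊆ DeltaSigma := by
  intro p hp
  have hpΔ := hI.core_subset_Delta hp
  refine mem_DeltaSigma_of_tendsto hpΔ (tendsto_order.2 ⟨fun a ha => Eventually.of_forall
    fun N => ha.trans_le (hpΔ.1 _ (indic_nonneg _)), fun ε hε => ?_⟩)
  have hstrict : SPref (fun x y => I y ≤ I x) (cst 1) (cst (1 - ε)) := by
    simp only [SPref, hI.map_cst]; constructor <;> linarith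
  obtain ⟨n₀, -, hn₀⟩ := hMC (cst 1) (1 - ε) hstrict (fun n => Ici n)
    (fun n => Set.Ici_subset_Ici.2 (Nat.le_succ n))
    (Set.eq_empty_of_forall_notMem fun m hm => by simpa using Set.mem_iInter.1 hm (m + 1)) 0
  have hpatch : patch 0 (Ici n₀) (cst 1) = cst 1 - indic (Ici n₀) := by
    ext m
    by_cases hm : m ∈ Ici n₀ <;>
      simp [patch_apply, hm, indic_apply_mem, indic_apply_notMem, cst_apply]
  have hlt : p (indic (Ici n₀)) < ε := by
    have := (not_le.1 hn₀).trans_le (hp _)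
    rw [hI.map_cst, hpatch, map_sub, Delta.apply_cst hpΔ] at this
    linarith
  filter_upwards [eventually_ge_atTop n₀] with N hN
  exact (apply_le_apply_of_nonneg hpΔ.1 (indic_le_indic (Set.Ici_subset_Ici.2 hN))).trans_lt hlt

/-- Hahn–Banach, with the sublinear majorant `z ↦ -I (-z)`. -/
lemma exists_mem_core_apply_eq (hI : IsNormalizedSuperlinear I) (x₀ : Linf) :
    ∃ p ∈ core I, p x₀ = I x₀ := by
  set N : Linf → ℝ := fun z => -I (-z) with hN
  have hN_hom : ∀ c : ℝ, 0 < c → ∀ z, N (c • z) = c * N z := fun c hc z => by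
    simp only [hN]
    rw [← smul_neg c z, hI.smul c hc.le, mul_neg]
  have hN_add : ∀ z w, N (z + w) ≤ N z + N w := fun z w => by
    simp only [hN, neg_add]; linarith [hI.superadd (-z) (-w)]
  have hI_le_N : ∀ z, I z ≤ N z := fun z => by simp only [hN]; linarith [hI.add_neg_le z]
  let f : Linf →ₗ.[ℝ] ℝ := LinearPMap.mkSpanSingleton' x₀ (I x₀) fun c hc => by
    rcases smul_eq_zero.1 hc with rfl | rfl
    · simp
    · simp [hI.map_zero]
  have hf : ∀ z : f.domain, f z ≤ N z := by
    rintro ⟨z, hz⟩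
    obtain ⟨c, rfl⟩ := Submodule.mem_span_singleton.1 hz
    rw [LinearPMap.mkSpanSingleton'_apply, RingHom.id_apply, smul_eq_mul]
    rcases le_or_gt 0 c with hc | hc
    · exact (hI.smul c hc x₀).symm.le.trans (hI_le_N _)
    · simp only [hN, ← neg_smul, hI.smul (-c) (by linarith), neg_mul, neg_neg, le_refl]
  obtain ⟨g, hgf, hgN⟩ := exists_extension_of_le_sublinear f N hN_hom hN_add hf
  have hIg : ∀ y, I y ≤ g y := fun y => by
    have := hgN (-y)
    simp only [hN, neg_neg, map_neg] at this
    linarith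
  have hg_pos : ∀ y : Linf, (∀ n, 0 ≤ y n) → 0 ≤ g y := fun y hy =>
    (hI.map_cst 0 ▸ hI.mono (cst 0) y hy).trans (hIg y)
  have hg1 : g (cst 1) = 1 := by
    refine le_antisymm ?_ ((hI.map_cst 1).symm.le.trans (hIg _))
    simpa [hN, neg_cst, hI.map_cst] using hgN (cst 1)
  refine ⟨ofPositive g hg_pos hg1, hIg, ?_⟩
  rw [ofPositive_apply, hgf ⟨x₀, Submodule.mem_span_singleton_self x₀⟩]
  exact LinearPMap.mkSpanSingleton'_apply_self _ _ _ _

lemma a15 (hI : IsNormalizedSuperlinear I) : A15 fun x y => I y ≤ I x := by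
  refine ⟨⟨fun x y => le_total _ _, fun x y z hxy hyz => hyz.trans hxy⟩,
    ⟨fun x y h => hI.mono y x h, by simp [SPref, hI.map_cst]⟩, fun x y z => ?_,
    fun x y θ h => by simpa [hI.add_cst] using h, fun x y θ a ha hx hy => ?_⟩
  · have hg : Continuous fun a : ℝ => I (a • x + (1 - a) • z) :=
      hI.continuous.comp (by fun_prop)
    exact ⟨isClosed_Icc.inter (isClosed_le continuous_const hg),
      isClosed_Icc.inter (isClosed_le hg continuous_const)⟩
  · dsimp only at hx hy ⊢
    rw [hI.map_cst] at hx hy ⊢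
    nlinarith [hI.concave x y ha, ha.1, ha.2]

lemma isu (hI : IsNormalizedSuperlinear I) : ISU fun x y => I y ≤ I x := fun x y a ha h => by
  dsimp only at h ⊢
  rw [hI.smul a ha, hI.smul a ha]
  exact mul_le_mul_of_nonneg_left h ha

end IsNormalizedSuperlinear

end NormalizedSuperlinear

section Preference

variable {R : Linf → Linf → Prop} {I : Linf → ℝ}

lemma smul_cst_add_smul_cst (α a b : ℝ) :
    α • cst a + (1 - α) • cst b = cst (AffineMap.lineMap b a α) := by
  ext; simp [cst, AffineMap.lineMap_apply_ring]; ring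

lemma isClosed_Icc_inter_of_lineMap {P : ℝ → Prop} {a b : ℝ} (hab : b ≤ a)
    (hP : IsClosed {α : ℝ | α ∈ Icc (0 : ℝ) 1 ∧ P (AffineMap.lineMap b a α)}) :
    IsClosed (Icc b a ∩ {θ | P θ}) := by
  have hcpt := isCompact_Icc.of_isClosed_subset hP fun α hα => hα.1
  have himage : AffineMap.lineMap b a '' {α : ℝ | α ∈ Icc (0 : ℝ) 1 ∧ P (AffineMap.lineMap b a α)}
      = Icc b a ∩ {θ | P θ} := by
    rw [← segment_eq_Icc hab, segment_eq_image_lineMap, ← Set.image_inter_preimage]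
    rfl
  exact himage ▸ (hcpt.image (AffineMap.lineMap_continuous)).isClosed

/-- On `[-‖x‖, ‖x‖]` the constants below `x` and those above `x` are closed, cover the interval
and are both nonempty, so by connectedness they meet. -/
lemma exists_cst_equiv (hA1 : A1 R) (hA2 : A2 R) (hA3 : A3 R) (x : Linf) :
    ∃ θ, R x (cst θ) ∧ R (cst θ) x := by
  have hx : -‖x‖ ≤ ‖x‖ := neg_le_self (norm_nonneg x)
  have hbelow := (hA3 (cst ‖x‖) x (cst (-‖x‖))).2
  have habove := (hA3 (cst ‖x‖) x (cst (-‖x‖))).1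
  simp only [smul_cst_add_smul_cst] at hbelow habove
  obtain ⟨θ, -, hθ₁, hθ₂⟩ := isPreconnected_closed_iff.1 isPreconnected_Icc _ _
    (isClosed_Icc_inter_of_lineMap (P := fun θ => R x (cst θ)) hx hbelow)
    (isClosed_Icc_inter_of_lineMap (P := fun θ => R (cst θ) x) hx habove)
    (fun θ hθ => (hA1.1 x (cst θ)).imp (fun h => ⟨hθ, h⟩) (fun h => ⟨hθ, h⟩))
    ⟨-‖x‖, ⟨le_rfl, hx⟩, ⟨le_rfl, hx⟩,
      hA2.1 _ _ fun n => by simpa [cst_apply] using neg_le_of_abs_le (abs_apply_le_norm x n)⟩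
    ⟨‖x‖, ⟨hx, le_rfl⟩, ⟨hx, le_rfl⟩,
      hA2.1 _ _ fun n => by simpa [cst_apply] using le_of_abs_le (abs_apply_le_norm x n)⟩
  exact ⟨θ, hθ₁.2, hθ₂.2⟩

lemma not_cst_le_cst_of_lt (hA2 : A2 R) (hA4 : A4 R) (hISU : ISU R) {a b : ℝ} (h : b < a) :
    ¬ R (cst b) (cst a) := fun hR => by
  have := hISU _ _ (a - b)⁻¹ (inv_nonneg.2 (sub_pos.2 h).le) (hA4 _ _ (-b) hR)
  rw [cst_add, cst_add, smul_cst, smul_cst, add_neg_cancel, mul_zero, ← sub_eq_add_neg,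
    inv_mul_cancel₀ (sub_pos.2 h).ne'] at this
  exact hA2.2.2 this

lemma ConstEquiv.map_cst (hA2 : A2 R) (hA4 : A4 R) (hISU : ISU R) (hI : ConstEquiv R I)
    (θ : ℝ) : I (cst θ) = θ :=
  le_antisymm (not_lt.1 fun h => not_cst_le_cst_of_lt hA2 hA4 hISU h (hI _).1)
    (not_lt.1 fun h => not_cst_le_cst_of_lt hA2 hA4 hISU h (hI _).2)

lemma ConstEquiv.represents (hA1 : A1 R) (hA2 : A2 R) (hA4 : A4 R) (hISU : ISU R)
    (hI : ConstEquiv R I) : Represents R I := fun x y =>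
  ⟨fun h => not_lt.1 fun hlt => not_cst_le_cst_of_lt hA2 hA4 hISU hlt
      (hA1.2 _ _ _ (hA1.2 _ _ _ (hI x).2 h) (hI y).1),
    fun h => hA1.2 _ _ _ (hA1.2 _ _ _ (hI x).1 (hA2.1 _ _ fun _ => h)) (hI y).2⟩

lemma Represents.eq_of_equiv (hR : Represents R I) {z : Linf} {c : ℝ} (hc : I (cst c) = c)
    (h₁ : R z (cst c)) (h₂ : R (cst c) z) : I z = c :=
  le_antisymm (hc ▸ (hR _ _).1 h₂) (hc ▸ (hR _ _).1 h₁)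

lemma ConstEquiv.isNormalizedSuperlinear (hA1 : A1 R) (hA2 : A2 R) (hA4 : A4 R) (hA5 : A5 R)
    (hISU : ISU R) (hI : ConstEquiv R I) : IsNormalizedSuperlinear I := by
  have hrep := hI.represents hA1 hA2 hA4 hISU
  have hmap := hI.map_cst hA2 hA4 hISU
  have hadd : ∀ x θ, I (x + cst θ) = I x + θ := fun x θ => by
    have h₁ := hA4 _ _ θ (hI x).1
    have h₂ := hA4 _ _ θ (hI x).2
    rw [cst_add] at h₁ h₂
    exact hrep.eq_of_equiv (hmap _) h₁ h₂
  have hsmul : ∀ α : ℝ, 0 ≤ α → ∀ x, I (α • x) = α * I x := fun α hα x => by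
    have h₁ := hISU _ _ α hα (hI x).1
    have h₂ := hISU _ _ α hα (hI x).2
    rw [smul_cst] at h₁ h₂
    exact hrep.eq_of_equiv (hmap _) h₁ h₂
  refine ⟨fun x y => ?_, hsmul, fun x y h => (hrep y x).1 (hA2.1 y x h), hmap⟩
  have hzero : ∀ z, R (z + cst (-I z)) (cst 0) := fun z =>
    (hrep _ _).2 (by rw [hadd, hmap, add_neg_cancel])
  have hmid := (hrep _ _).1 (hA5 _ _ 0 (1 / 2) ⟨by norm_num, by norm_num⟩ (hzero x) (hzero y))
  have heq : (1 / 2 : ℝ) • (x + cst (-I x)) + (1 - 1 / 2 : ℝ) • (y + cst (-I y))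
      = (1 / 2 : ℝ) • (x + y) + cst (-(I x + I y) / 2) := by
    ext n; simp [cst]; ring
  rw [heq, hadd, hsmul _ (by norm_num), hmap] at hmid
  linarith

end Preference

section Eigen

def eigenSet (T : Linf → Linf) : Set Ba := {p | ∀ y, p (T y) = p (T (cst 1)) * p y}

lemma isClosed_eigenSet (T : Linf → Linf) : IsClosed (eigenSet T) := by
  simp only [eigenSet, Set.ofPred_forall]
  exact isClosed_iInter fun y => isClosed_eq (WeakDual.eval_continuous _)
    ((WeakDual.eval_continuous _).mul (WeakDual.eval_continuous _))

lemma map_sub_cst (T : Linf →ₗ[ℝ] Linf) (y : Linf) (c : ℝ) :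
    T (y - cst c) = T y - c • T (cst 1) := by
  rw [map_sub, ← mul_one c, ← smul_cst, map_smul, mul_one]

variable {T : Linf →ₗ[ℝ] Linf} {I : Linf → ℝ} {p : Ba}

lemma le_apply_add_apply_of_ITIS (hITIS : ITIS T fun x y => I y ≤ I x) (hp : p ∈ core I)
    {z d : Linf} (h : I z ≤ I (z + d)) : I z ≤ p z + p (T d) :=
  (hITIS z d h).trans (map_add p z (T d) ▸ hp _)

lemma mul_le_apply_of_ITIS (hI : IsNormalizedSuperlinear I)
    (hITIS : ITIS T fun x y => I y ≤ I x) (hp : p ∈ core I) (y : Linf) :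
    p (T (cst 1)) * I y ≤ p (T y) := by
  have h := le_apply_add_apply_of_ITIS hITIS hp (z := cst (I y)) (d := y - cst (I y))
    (by rw [add_sub_cancel, hI.map_cst])
  rw [hI.map_cst, map_sub_cst, map_sub, map_smul, Delta.apply_cst (hI.core_subset_Delta hp),
    smul_eq_mul] at h
  linarith

lemma apply_le_mul_of_ITIS (hI : IsNormalizedSuperlinear I)
    (hITIS : ITIS T fun x y => I y ≤ I x) (hp : p ∈ core I) {x : Linf} (hpx : p x = I x) :
    p (T x) ≤ p (T (cst 1)) * I x := by
  have h := le_apply_add_apply_of_ITIS hITIS hp (z := x) (d := -(x - cst (I x)))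
    (by rw [show x + -(x - cst (I x)) = cst (I x) by abel, hI.map_cst])
  rw [map_neg, map_sub_cst, map_neg, map_sub, map_smul, smul_eq_mul, hpx] at h
  linarith

/-- If `p` is exposed in the core, then `q = λ⁻¹ (p ∘ T)` (with `λ = ⟨T 1, p⟩`) again lies in the
core and touches `I` at the exposing point, hence `q = p`. -/
lemma mem_eigenSet_of_isExposedBy (hI : IsNormalizedSuperlinear I)
    (hITIS : ITIS T fun x y => I y ≤ I x) (hT : PosMap T) (hp : p ∈ core I) {w : Linf}
    (hexp : IsExposedBy (core I) w p) : p ∈ eigenSet T := by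
  obtain ⟨q, hq, hqw⟩ := hI.exists_mem_core_apply_eq w
  have hpw : p w = I w := le_antisymm ((hexp q hq).1.trans hqw.le) (hp w)
  let pT : Linf →ₗ[ℝ] ℝ := (WeakDual.toStrongDual p).toLinearMap ∘ₗ T
  have hpT : ∀ y : Linf, (∀ n, 0 ≤ y n) → 0 ≤ pT y := fun y hy =>
    (hI.core_subset_Delta hp).1 _ (hT y hy)
  rcases (hpT (cst 1) fun _ => zero_le_one).eq_or_lt with hzero | hpos
  · intro y
    have h := abs_apply_le_mul_norm_of_nonneg hpT y
    rw [← hzero, zero_mul, abs_nonpos_iff] at h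
    change pT y = pT (cst 1) * p y
    rw [h, ← hzero, zero_mul]
  have hq1 : ((pT (cst 1))⁻¹ • pT) (cst 1) = 1 := inv_mul_cancel₀ hpos.ne'
  set q' := ofPositive ((pT (cst 1))⁻¹ • pT)
    (fun y hy => mul_nonneg (inv_nonneg.2 hpos.le) (hpT y hy)) hq1
  have hq'core : q' ∈ core I := fun y =>
    (le_inv_mul_iff₀ hpos).2 (mul_le_apply_of_ITIS hI hITIS hp y)
  have hq'w : q' w = p w := by
    have := le_antisymm (apply_le_mul_of_ITIS hI hITIS hp hpw) (mul_le_apply_of_ITIS hI hITIS hp w)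
    show (pT (cst 1))⁻¹ * pT w = p w
    rw [show pT w = p (T w) from rfl, this, hpw]
    exact inv_mul_cancel_left₀ hpos.ne' (I w)
  intro y
  have := congrArg (fun r : Ba => r y) ((hexp q' hq'core).2 hq'w)
  change (pT (cst 1))⁻¹ * pT y = p y at this
  rw [inv_mul_eq_iff_eq_mul₀ hpos.ne'] at this
  exact this

lemma exists_mem_core_inter_eigenSet_le_add (hI : IsNormalizedSuperlinear I)
    (hσ : core I ⊆ DeltaSigma) (hITIS : ITIS T fun x y => I y ≤ I x) (hT : PosMap T)
    (x : Linf) {ε : ℝ} (hε : 0 < ε) : ∃ p ∈ core I ∩ eigenSet T, p x ≤ I x + ε := by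
  obtain ⟨p₀, hp₀, hp₀x⟩ := hI.exists_mem_core_apply_eq x
  obtain ⟨p, hp, ⟨w, hw⟩, hpx⟩ := exists_isExposedBy_le_add hI.isCompact_core hσ hp₀ x hε
  exact ⟨p, ⟨hp, mem_eigenSet_of_isExposedBy hI hITIS hT hp hw⟩, hp₀x ▸ hpx⟩

end Eigen

section MinForm

variable {D : Set Ba} {I : Linf → ℝ}

lemma minForm_of_forall_exists_le (hD : IsCompact D) (hle : ∀ p ∈ D, ∀ x, I x ≤ p x)
    (happrox : ∀ x ε, 0 < ε → ∃ p ∈ D, p x ≤ I x + ε) : MinForm D I := by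
  intro x
  obtain ⟨p₀, hp₀, -⟩ := happrox x 1 one_pos
  obtain ⟨p, hp, hmin⟩ := hD.exists_isMinOn ⟨p₀, hp₀⟩ (WeakDual.eval_continuous x).continuousOn
  refine ⟨⟨p, hp, le_antisymm (hle p hp x) (le_of_forall_pos_le_add fun ε hε => ?_)⟩,
    fun q hq => hle q hq x⟩
  obtain ⟨q, hq, hqx⟩ := happrox x ε hε
  exact (hmin hq).trans hqx

lemma MinForm.isNormalizedSuperlinear (hI : MinForm D I) (hD : D ⊆ Delta) :
    IsNormalizedSuperlinear I where
  superadd x y := by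
    obtain ⟨p, hp, hpxy⟩ := (hI (x + y)).1
    rw [hpxy, map_add]
    exact add_le_add ((hI x).2 p hp) ((hI y).2 p hp)
  smul α hα x := by
    obtain ⟨p, hp, hpx⟩ := (hI x).1
    obtain ⟨q, hq, hqx⟩ := (hI (α • x)).1
    refine le_antisymm ?_ ?_
    · simpa [hpx] using (hI (α • x)).2 p hp
    · rw [hqx, map_smul, smul_eq_mul]
      exact mul_le_mul_of_nonneg_left ((hI x).2 q hq) hα
  mono x y h := by
    obtain ⟨p, hp, hpy⟩ := (hI y).1
    exact ((hI x).2 p hp).trans (hpy ▸ apply_le_apply_of_nonneg (hD hp).1 h)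
  map_cst θ := by
    obtain ⟨p, hp, hpθ⟩ := (hI (cst θ)).1
    rw [hpθ, Delta.apply_cst (hD hp)]

lemma MinForm.mc (hI : MinForm D I) (hDc : IsCompact D) (hDσ : D ⊆ DeltaSigma) :
    MC fun x y => I y ≤ I x := by
  have hsl := hI.isNormalizedSuperlinear fun p hp => (hDσ hp).1
  intro x θ hxθ E hE hempty k
  have hθ : θ < I x := by
    simp only [SPref, hsl.map_cst, not_le] at hxθ
    exact hxθ.2
  set M := |k| + ‖x‖
  have hM : 0 ≤ M := by positivity
  obtain ⟨n₀, hn₀⟩ := hDc.exists_forall_apply_indic_lt hDσ (antitone_nat_of_succ_le hE) hempty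
    (ε := (I x - θ) / (M + 1)) (div_pos (sub_pos.2 hθ) (by linarith))
  refine ⟨n₀, ?_⟩
  suffices h : θ < I (patch k (E n₀) x) by
    simp only [SPref, hsl.map_cst, not_le]
    exact ⟨h.le, h⟩
  obtain ⟨p, hp, hpx⟩ := (hI (patch k (E n₀) x)).1
  have hpatch : ∀ n, (x - M • indic (E n₀)) n ≤ patch k (E n₀) x n := fun n => by
    classical
    have := abs_le.1 (abs_apply_le_norm x n)
    by_cases hn : n ∈ E n₀
    · simp [patch_apply, hn, indic_apply_mem, M]
      linarith [neg_abs_le k]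
    · simp [patch_apply, hn, indic_apply_notMem]
  have hsmall : M * ((I x - θ) / (M + 1)) < I x - θ := by
    rw [mul_div_assoc', div_lt_iff₀ (by linarith)]
    nlinarith
  calc θ < I x - M * ((I x - θ) / (M + 1)) := by linarith
    _ ≤ p x - M * p (indic (E n₀)) :=
        sub_le_sub ((hI x).2 p hp) (mul_le_mul_of_nonneg_left (hn₀ p hp).le hM)
    _ = p (x - M • indic (E n₀)) := by rw [map_sub, map_smul, smul_eq_mul]
    _ ≤ p (patch k (E n₀) x) := apply_le_apply_of_nonneg (hDσ hp).1.1 hpatch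
    _ = I (patch k (E n₀) x) := hpx.symm

lemma MinForm.itis {T : Linf → Linf} (hI : MinForm D I)
    (hD : ∀ p ∈ D, ∃ c ∈ Icc (0 : ℝ) 1, ∀ y, p (T y) = c * p y) :
    ITIS T fun x y => I y ≤ I x := by
  intro x d (h : I x ≤ I (x + d))
  obtain ⟨p, hp, hpx⟩ := (hI (x + T d)).1
  obtain ⟨c, hc, hpT⟩ := hD p hp
  have h₁ : I x ≤ p x := (hI x).2 p hp
  have h₂ : I x ≤ p x + p d := h.trans (map_add p x d ▸ (hI (x + d)).2 p hp)
  show I x ≤ I (x + T d)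
  rw [hpx, map_add, hpT]
  rcases le_total 0 (p d) with hd | hd
  · nlinarith [mul_nonneg hc.1 hd]
  · nlinarith [mul_le_mul_of_nonpos_right hc.2 hd]

end MinForm

theorem exists_minForm_of_axioms (T : Linf →ₗ[ℝ] Linf) (hT : PosMap T)
    {R : Linf → Linf → Prop} (hA15 : A15 R) (hMC : MC R) (hISU : ISU R) (hITIS : ITIS T R) :
    ∃ D : Set Ba, D.Nonempty ∧ IsClosed D ∧ D ⊆ DeltaSigma ∩ DeltaT T ∧
      ∃ I : Linf → ℝ, ConstEquiv R I ∧ Represents R I ∧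
        (∀ J : Linf → ℝ, ConstEquiv R J → J = I) ∧ MinForm D I := by
  obtain ⟨hA1, hA2, hA3, hA4, hA5⟩ := hA15
  obtain ⟨I, hI⟩ : ∃ I, ConstEquiv R I := Classical.skolem.1 (exists_cst_equiv hA1 hA2 hA3)
  have hrep := hI.represents hA1 hA2 hA4 hISU
  have hmap := hI.map_cst hA2 hA4 hISU
  have hsl := hI.isNormalizedSuperlinear hA1 hA2 hA4 hA5 hISU
  have hunique : ∀ J : Linf → ℝ, ConstEquiv R J → J = I := fun J hJ =>
    funext fun x => (hrep.eq_of_equiv (hmap _) (hJ x).1 (hJ x).2).symm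
  obtain rfl : R = fun x y => I y ≤ I x := funext₂ fun x y => propext (hrep x y)
  have hσ := hsl.core_subset_DeltaSigma hMC
  have hmin : MinForm (core I ∩ eigenSet T) I :=
    minForm_of_forall_exists_le (hsl.isCompact_core.inter_right (isClosed_eigenSet T))
      (fun p hp => hp.1) fun x _ hε =>
        exists_mem_core_inter_eigenSet_le_add hsl hσ hITIS hT x hε
  obtain ⟨⟨p, hp, -⟩, -⟩ := hmin 0
  exact ⟨_, ⟨p, hp⟩, (isClosed_core I).inter (isClosed_eigenSet T),
    fun p hp => ⟨hσ hp.1, hsl.core_subset_Delta hp.1, _, hp.2⟩, I, hI, hrep, hunique, hmin⟩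

theorem axioms_of_minForm {T : Linf → Linf} (hT : PosMap T)
    (hF : ∀ p ∈ DeltaSigma ∩ DeltaT T, p (T (cst 1)) ≤ 1) {D : Set Ba} (hD : IsClosed D)
    (hDF : D ⊆ DeltaSigma ∩ DeltaT T) {I : Linf → ℝ} (hI : MinForm D I) :
    A15 (fun x y => I y ≤ I x) ∧ MC (fun x y => I y ≤ I x) ∧
      ISU (fun x y => I y ≤ I x) ∧ ITIS T (fun x y => I y ≤ I x) := by
  have hDΔ : D ⊆ Delta := fun p hp => (hDF hp).1.1
  have hsl := hI.isNormalizedSuperlinear hDΔ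
  refine ⟨hsl.a15, hI.mc (isCompact_of_subset_Delta hD hDΔ) fun p hp => (hDF hp).1, hsl.isu,
    hI.itis fun p hp => ?_⟩
  obtain ⟨-, -, c, hc⟩ := hDF hp
  have hc1 : p (T (cst 1)) = c := by rw [hc, Delta.apply_cst (hDΔ hp), mul_one]
  exact ⟨c, ⟨hc1 ▸ (hDΔ hp).1 _ (hT _ fun _ => zero_le_one), hc1 ▸ hF p (hDF hp)⟩, hc⟩

theorem stmt11_general (T : Linf → Linf) (hlin : IsLinearMap ℝ T)
    (hpos : PosMap T) :
    (∀ R : Linf → Linf → Prop, A15 R → MC R → ISU R → ITIS T R →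
      ∃ D : Set Ba, D.Nonempty ∧ IsClosed D ∧ D ⊆ DeltaSigma ∩ DeltaT T ∧
        ∃ I : Linf → ℝ, ConstEquiv R I ∧ Represents R I ∧
          (∀ J : Linf → ℝ, ConstEquiv R J → J = I) ∧ MinForm D I) ∧
    ((∀ p ∈ DeltaSigma ∩ DeltaT T, p (T (cst 1)) ≤ 1) →
      ∀ D : Set Ba, D.Nonempty → IsClosed D → D ⊆ DeltaSigma ∩ DeltaT T →
        ∀ I : Linf → ℝ, MinForm D I →
          A15 (fun x y => I y ≤ I x) ∧ MC (fun x y => I y ≤ I x) ∧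
            ISU (fun x y => I y ≤ I x) ∧ ITIS T (fun x y => I y ≤ I x)) :=
  ⟨fun _ hA15 hMC hISU hITIS =>
      exists_minForm_of_axioms (IsLinearMap.mk' T hlin) hpos hA15 hMC hISU hITIS,
    fun hF _ _ hD hDF _ hI => axioms_of_minForm hpos hF hD hDF hI⟩

/-- Proposition: countably additive maxmin: maxmin over a nonempty
closed subset `D` of `F = {p ∈ Δ^σ : p is an eigenvector of T*}`. -/
theorem stmt11 (T : Linf → Linf) (hlin : IsLinearMap ℝ T) (hcont : Continuous T)
    (hpos : PosMap T) :
    (∀ R : Linf → Linf → Prop, A15 R → MC R → ISU R → ITIS T R →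
      ∃ D : Set Ba, D.Nonempty ∧ IsClosed D ∧ D ⊆ DeltaSigma ∩ DeltaT T ∧
        ∃ I : Linf → ℝ, ConstEquiv R I ∧ Represents R I ∧
          (∀ J : Linf → ℝ, ConstEquiv R J → J = I) ∧ MinForm D I) ∧
    ((∀ p ∈ DeltaSigma ∩ DeltaT T, p (T (cst 1)) ≤ 1) →
      ∀ D : Set Ba, D.Nonempty → IsClosed D → D ⊆ DeltaSigma ∩ DeltaT T →
        ∀ I : Linf → ℝ, MinForm D I →
          A15 (fun x y => I y ≤ I x) ∧ MC (fun x y => I y ≤ I x) ∧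
            ISU (fun x y => I y ≤ I x) ∧ ITIS T (fun x y => I y ≤ I x)) :=
  stmt11_general T hlin hpos
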